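/- Let m be a positive integer, p a prime not dividing m, and x ∈ ZMod p with x ≠ 0. Then ∑_{n=1}^{p-1} T_n(x) · ((-m)⁻¹)^n = ((-x)⁻¹)^(m-1) · ∑_{k=0}^{m-1} ((m-1)!/k!) · (-x)^k in ZMod p, where T_n(x) denotes the n-th Touchard polynomial evaluated at x (reduced mod p) and (m-1)!/k! is the integer ∏_{s=k+1}^{m-1} s. -/

import Mathlib

/-!
Write `T_n(x) = ∑_k S(n,k) x^k` with `k! S(n,k) = ∑_i (-1)^(k-i) C(k,i) i^n`; for `n < p` only
`k < p` occurs, so the factorials are invertible mod `p`. Summing against `y^n` turns the left side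
into a combination of geometric sums `∑_{n=1}^{p-1} (i y)^n`, which vanish unless `i y = 1`. For
`y = (-r)⁻¹`, `r = m mod p`, only `i = p - r` survives and the left side collapses to
`-(x^(p-r)/(p-r)!) ∑_{i<r} (-x)^i/i!`. The right side `Q m` satisfies `Q (m+1) = m (-x)⁻¹ Q m + 1`,
so it only depends on `m mod p`, and by Wilson's theorem and `x^(p-1) = 1` the closed form obeys the
same recursion in `r`.
-/

open Polynomial

/-- The Touchard polynomials in `ℤ[X]`, determined by `touchard 0 = 1` and
`touchard (n+1) = X * ∑_{k=0}^{n} C(n,k) * touchard k`. -/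
noncomputable def touchard : ℕ → ℤ[X]
  | 0 => 1
  | n + 1 => X * ∑ k ∈ (Finset.range (n + 1)).attach, (n.choose k : ℤ[X]) * touchard k
decreasing_by exact Finset.mem_range.mp k.2

open Finset
open scoped Nat

theorem touchard_succ (n : ℕ) :
    touchard (n + 1) = X * ∑ k ∈ range (n + 1), (n.choose k : ℤ[X]) * touchard k := by
  rw [touchard, sum_attach (range (n + 1)) fun k => (n.choose k : ℤ[X]) * touchard k]

theorem natDegree_touchard_le (n : ℕ) : (touchard n).natDegree ≤ n := by
  induction n using Nat.strong_induction_on with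
  | _ n ih =>
    rcases n with _ | n
    · simp [touchard]
    · rw [touchard_succ, add_comm n]
      refine natDegree_mul_le_of_le natDegree_X_le
        (natDegree_sum_le_of_forall_le _ _ fun k hk => ?_)
      have hk : k < n + 1 := by simpa [add_comm] using hk
      exact natDegree_mul_le.trans (by simpa using (ih k hk).trans (Nat.lt_succ_iff.1 hk))

/-- `k! S(n,k)`, the number of surjections from an `n`-set onto a `k`-set (inclusion–exclusion). -/
def surjCount (n k : ℕ) : ℤ := ∑ i ∈ range (k + 1), (-1) ^ (k - i) * k.choose i * (i : ℤ) ^ n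

theorem surjCount_zero_left (k : ℕ) : surjCount 0 k = 0 ^ k := by
  rw [← add_neg_cancel (1 : ℤ), add_pow]
  simp [surjCount, mul_comm]

theorem surjCount_succ_zero (n : ℕ) : surjCount (n + 1) 0 = 0 := by
  simp [surjCount]

theorem surjCount_succ_succ (n k : ℕ) :
    surjCount (n + 1) (k + 1) = (k + 1) * ∑ j ∈ range (n + 1), n.choose j * surjCount j k := by
  have binomial (i : ℕ) : ∑ j ∈ range (n + 1), (n.choose j : ℤ) * (i : ℤ) ^ j = (i + 1) ^ n := by
    simp [add_pow, mul_comm]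
  have absorb (i : ℕ) : ((k + 1).choose (i + 1) : ℤ) * (i + 1) = (k + 1) * k.choose i := by
    exact_mod_cast (Nat.add_one_mul_choose_eq k i).symm
  calc surjCount (n + 1) (k + 1)
      = ∑ i ∈ range (k + 1), (k + 1) * ((-1) ^ (k - i) * k.choose i * ((i : ℤ) + 1) ^ n) := by
        rw [surjCount, sum_range_succ']
        simp only [Nat.cast_zero, zero_pow n.succ_ne_zero, mul_zero, add_zero]
        refine sum_congr rfl fun i _ => ?_
        push_cast
        linear_combination (-1) ^ (k - i) * ((i : ℤ) + 1) ^ n * absorb i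
    _ = _ := by
        simp only [surjCount, mul_sum, ← binomial]
        rw [sum_comm]
        refine sum_congr rfl fun i _ => sum_congr rfl fun j _ => by ring

theorem factorial_mul_coeff_touchard (n k : ℕ) :
    (k ! : ℤ) * (touchard n).coeff k = surjCount n k := by
  induction n using Nat.strong_induction_on generalizing k with
  | _ n ih =>
    rcases n with _ | n
    · rcases k with _ | k <;> simp [touchard, surjCount_zero_left, coeff_one]
    · rcases k with _ | k
      · simp [touchard_succ, surjCount_succ_zero]
      · rw [touchard_succ, coeff_X_mul, finsetSum_coeff, surjCount_succ_succ, Nat.factorial_succ,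
          mul_sum, mul_sum]
        refine sum_congr rfl fun j hj => ?_
        rw [← ih j (mem_range.1 hj) k, ← C_eq_natCast, coeff_C_mul]
        push_cast
        ring

theorem ZMod.natCast_self_sub {n r : ℕ} (hr : r ≤ n) : ((n - r : ℕ) : ZMod n) = -r := by
  rw [Nat.cast_sub hr, ZMod.natCast_self, zero_sub]

theorem ZMod.natCast_factorial_ne_zero {p : ℕ} [Fact p.Prime] {k : ℕ} (hk : k < p) :
    (k ! : ZMod p) ≠ 0 := by
  rw [Ne, ZMod.natCast_eq_zero_iff, Nat.Prime.dvd_factorial Fact.out]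
  omega

theorem ZMod.factorial_mul_factorial_sub_one_sub {p : ℕ} [Fact p.Prime] {r : ℕ} (hr : r < p) :
    (r ! * (p - 1 - r)! : ZMod p) = -(-1) ^ r := by
  induction r with
  | zero => simp [ZMod.wilsons_lemma]
  | succ r ih =>
    specialize ih (by omega)
    have hsucc : p - 1 - r = p - 1 - (r + 1) + 1 := by omega
    have hc : ((p - 1 - (r + 1) + 1 : ℕ) : ZMod p) = -(r + 1) := by
      rw [← hsucc, Nat.sub_sub, Nat.add_comm 1, ZMod.natCast_self_sub hr.le]
      push_cast; ring
    rw [hsucc, Nat.factorial_succ, Nat.cast_mul, hc] at ih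
    rw [Nat.factorial_succ]
    push_cast at ih ⊢
    linear_combination -ih

theorem FiniteField.sum_Icc_pow {K : Type*} [Field K] [Fintype K] [DecidableEq K] (a : K) :
    ∑ n ∈ Icc 1 (Fintype.card K - 1), a ^ n = if a = 1 then -1 else 0 := by
  have hq : 1 ≤ Fintype.card K := Fintype.card_pos
  rw [← Ico_add_one_right_eq_Icc, Nat.sub_add_cancel hq, sum_Ico_eq_sub _ hq, sum_range_one,
    pow_zero]
  split_ifs with ha
  · simp [ha]
  · rw [geom_sum_eq ha, FiniteField.pow_card, div_self (sub_ne_zero.2 ha), sub_self]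

theorem aeval_touchard_eq_sum {p : ℕ} [Fact p.Prime] {n : ℕ} (hn : n < p) (x : ZMod p) :
    aeval x (touchard n) = ∑ k ∈ range p, (surjCount n k : ZMod p) / k ! * x ^ k := by
  rw [aeval_eq_sum_range' ((natDegree_touchard_le n).trans_lt hn)]
  refine sum_congr rfl fun k hk => ?_
  rw [← factorial_mul_coeff_touchard, zsmul_eq_mul]
  push_cast
  field_simp [ZMod.natCast_factorial_ne_zero (mem_range.1 hk)]

theorem sum_surjCount_mul_inv_pow {p : ℕ} [Fact p.Prime] {j k : ℕ} (hj0 : 0 < j) (hj : j < p)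
    (hk : k < p) :
    ∑ n ∈ Icc 1 (p - 1), (surjCount n k : ZMod p) * ((j : ZMod p)⁻¹) ^ n
      = if j ≤ k then -((-1) ^ (k - j) * k.choose j : ZMod p) else 0 := by
  have hj' : (j : ZMod p) ≠ 0 := by
    rw [Ne, ZMod.natCast_eq_zero_iff]; exact Nat.not_dvd_of_pos_of_lt hj0 hj
  have root (i : ℕ) (hi : i ∈ range (k + 1)) : (i : ZMod p) * (j : ZMod p)⁻¹ = 1 ↔ i = j := by
    rw [mul_inv_eq_one₀ hj', ZMod.natCast_eq_natCast_iff', Nat.mod_eq_of_lt hj,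
      Nat.mod_eq_of_lt ((mem_range.1 hi).trans_le hk)]
  have geom := FiniteField.sum_Icc_pow (K := ZMod p)
  rw [ZMod.card] at geom
  simp only [surjCount, Int.cast_sum, Int.cast_mul, Int.cast_pow, Int.cast_natCast, sum_mul]
  rw [sum_comm]
  simp only [mul_assoc, ← mul_pow, ← mul_sum, geom]
  rw [sum_congr rfl fun i hi => by rw [if_congr (root i hi) rfl rfl]]
  simp

def truncExpValue {p : ℕ} [Fact p.Prime] (x : ZMod p) (r : ℕ) : ZMod p :=
  -(x ^ (p - r) / ((p - r)! : ZMod p)) * ∑ i ∈ range r, (-x) ^ i / i !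

theorem sum_aeval_touchard_mul_neg_inv_pow {p : ℕ} [Fact p.Prime] (x : ZMod p) {r : ℕ}
    (hr0 : 0 < r) (hr : r < p) :
    ∑ n ∈ Icc 1 (p - 1), aeval x (touchard n) * ((-(r : ZMod p))⁻¹) ^ n = truncExpValue x r := by
  obtain ⟨j, hj, rfl⟩ : ∃ j < p, r = p - j := ⟨p - r, by omega, by omega⟩
  have hj0 : 0 < j := by omega
  rw [ZMod.natCast_self_sub hj.le, neg_neg, truncExpValue, Nat.sub_sub_self hj.le]
  calc _ = ∑ k ∈ range p, x ^ k / k ! *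
          ∑ n ∈ Icc 1 (p - 1), (surjCount n k : ZMod p) * ((j : ZMod p)⁻¹) ^ n := by
        rw [sum_congr rfl fun n hn => by
          rw [aeval_touchard_eq_sum (by have := (mem_Icc.1 hn).2; omega), sum_mul], sum_comm]
        refine sum_congr rfl fun k _ => ?_
        rw [mul_sum]
        exact sum_congr rfl fun n _ => by ring
    _ = ∑ k ∈ range p, x ^ k / k ! * if j ≤ k then -((-1) ^ (k - j) * k.choose j : ZMod p) else 0 :=
        sum_congr rfl fun k hk => by rw [sum_surjCount_mul_inv_pow hj0 hj (mem_range.1 hk)]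
    _ = ∑ i ∈ range (p - j), x ^ (j + i) / (j + i)! * -((-1) ^ i * (j + i).choose j : ZMod p) := by
        rw [show range p = range (j + (p - j)) by rw [Nat.add_sub_cancel' hj.le], sum_range_add]
        rw [sum_eq_zero fun k hk => by rw [if_neg (by simpa using hk), mul_zero], zero_add]
        exact sum_congr rfl fun i _ => by
          rw [if_pos (Nat.le_add_right j i), Nat.add_sub_cancel_left]
    _ = _ := by
        rw [mul_sum]
        refine sum_congr rfl fun i hi => ?_
        have hji : j + i < p := by have := mem_range.1 hi; omega
        have hchoose : ((j + i).choose j : ZMod p) * j ! * i ! = (j + i)! := by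
          have := Nat.choose_mul_factorial_mul_factorial (Nat.le_add_right j i)
          rw [Nat.add_sub_cancel_left] at this
          exact_mod_cast congrArg (Nat.cast : ℕ → ZMod p) this
        have hC := left_ne_zero_of_mul <| left_ne_zero_of_mul <|
          hchoose ▸ ZMod.natCast_factorial_ne_zero hji
        have := ZMod.natCast_factorial_ne_zero (p := p) (k := i) (by omega)
        have := ZMod.natCast_factorial_ne_zero (p := p) (k := j) (by omega)
        rw [← hchoose, neg_pow x, pow_add]
        field_simp

def arrangementSum {K : Type*} [Field K] (z : K) (m : ℕ) : K :=
  z⁻¹ ^ (m - 1) * ∑ k ∈ range m, ((∏ s ∈ Icc (k + 1) (m - 1), s : ℕ) : K) * z ^ k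

theorem arrangementSum_succ {K : Type*} [Field K] {z : K} (hz : z ≠ 0) (m : ℕ) :
    arrangementSum z (m + 1) = m * z⁻¹ * arrangementSum z m + 1 := by
  rcases m with _ | n
  · simp [arrangementSum]
  · simp only [arrangementSum, Nat.add_sub_cancel, sum_range_succ _ (n + 1)]
    rw [sum_congr rfl fun k hk => by rw [prod_Icc_succ_top (mem_range.1 hk), Nat.cast_mul,
      mul_right_comm], ← sum_mul, Icc_eq_empty (by omega), prod_empty, Nat.cast_one, one_mul,
      mul_add, inv_pow, inv_mul_cancel₀ (pow_ne_zero _ hz)]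
    ring

theorem truncExpValue_succ {p : ℕ} [Fact p.Prime] {x : ZMod p} (hx : x ≠ 0) {r : ℕ}
    (hr : r + 1 < p) : truncExpValue x (r + 1) = r * (-x)⁻¹ * truncExpValue x r + 1 := by
  rcases Nat.eq_zero_or_pos r with rfl | hr0
  · simp [truncExpValue, ZMod.wilsons_lemma, ZMod.pow_card_sub_one_eq_one hx]
  have hsub : p - r = p - (r + 1) + 1 := by omega
  have hfac : ((p - (r + 1) + 1)! : ZMod p) = -r * (p - (r + 1))! := by
    rw [Nat.factorial_succ, Nat.cast_mul, ← hsub, ZMod.natCast_self_sub (by omega)]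
  have hwilson := ZMod.factorial_mul_factorial_sub_one_sub (p := p) (r := r) (by omega)
  rw [Nat.sub_sub, Nat.add_comm 1] at hwilson
  have hfermat : x ^ (p - (r + 1)) * x ^ r = 1 := by
    rw [← pow_add, show p - (r + 1) + r = p - 1 by omega]
    exact ZMod.pow_card_sub_one_eq_one hx
  have hr' : (r : ZMod p) ≠ 0 := by
    rw [Ne, ZMod.natCast_eq_zero_iff]; exact Nat.not_dvd_of_pos_of_lt hr0 (by omega)
  have := ZMod.natCast_factorial_ne_zero (p := p) (k := r) (by omega)
  have := ZMod.natCast_factorial_ne_zero (p := p) (k := p - (r + 1)) (by omega)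
  unfold truncExpValue
  rw [hsub, sum_range_succ, hfac, pow_succ x (p - (r + 1)), neg_pow x]
  field_simp
  linear_combination -hwilson - (-1) ^ r * hfermat

theorem arrangementSum_neg_eq_truncExpValue {p : ℕ} [Fact p.Prime] {x : ZMod p} (hx : x ≠ 0)
    {m : ℕ} (hm : ¬ p ∣ m) : arrangementSum (-x) m = truncExpValue x (m % p) := by
  induction m with
  | zero => exact absurd (dvd_zero p) hm
  | succ m ih =>
    have hp : 1 < p := (Fact.out : p.Prime).one_lt
    have hmod : (m + 1) % p = (m % p + 1) % p := by rw [Nat.add_mod, Nat.one_mod_eq_one.2 hp.ne']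
    have hlt : m % p + 1 < p := lt_of_le_of_ne (Nat.mod_lt m (by omega)) fun h =>
      hm (Nat.dvd_of_mod_eq_zero (by rw [hmod, h, Nat.mod_self]))
    rw [arrangementSum_succ (neg_ne_zero.2 hx), hmod, Nat.mod_eq_of_lt hlt,
      truncExpValue_succ hx hlt, ← ZMod.natCast_mod m p]
    by_cases hpm : p ∣ m
    · simp [Nat.mod_eq_zero_of_dvd hpm]
    · rw [ih hpm]

theorem touchard_sum_eval_general (m : ℕ) (p : ℕ) (hp : p.Prime) (hpm : ¬ p ∣ m)
    (x : ZMod p) (hx : x ≠ 0) :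
    ∑ n ∈ Finset.Icc 1 (p - 1), (aeval x (touchard n)) * ((-(m : ZMod p))⁻¹) ^ n
      = ((-x)⁻¹) ^ (m - 1) *
          ∑ k ∈ Finset.range m,
            ((∏ s ∈ Finset.Icc (k + 1) (m - 1), s : ℕ) : ZMod p) * (-x) ^ k := by
  have := Fact.mk hp
  have hr0 : 0 < m % p := Nat.pos_of_ne_zero fun h => hpm (Nat.dvd_of_mod_eq_zero h)
  rw [← ZMod.natCast_mod m p, sum_aeval_touchard_mul_neg_inv_pow x hr0 (Nat.mod_lt m hp.pos)]
  exact (arrangementSum_neg_eq_truncExpValue hx hpm).symm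

theorem touchard_sum_eval (m : ℕ) (hm : 0 < m) (p : ℕ) (hp : p.Prime) (hpm : ¬ p ∣ m)
    (x : ZMod p) (hx : x ≠ 0) :
    ∑ n ∈ Finset.Icc 1 (p - 1), (aeval x (touchard n)) * ((-(m : ZMod p))⁻¹) ^ n
      = ((-x)⁻¹) ^ (m - 1) *
          ∑ k ∈ Finset.range m,
            ((∏ s ∈ Finset.Icc (k + 1) (m - 1), s : ℕ) : ZMod p) * (-x) ^ k :=
  touchard_sum_eval_general m p hp hpm x hx
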